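/- arXiv:1405.3888 — 2 statements merged into one kernel-verified Lean document; each statement's English description precedes it below -/
import Mathlib

section
/- Let I ⊆ {1,…,7} be nonempty and let ε^i_I = 1 if |I∩{2,5,7}| = i and 0 otherwise. The I-canonical elements for the integer lattice 𝔍 of the simply connected group Ẽ_7 are precisely the elements Σ_{i∈I}H_i + ε^1_I H_s + ε^3_I H_s with s ∈ I∩{2,5,7}; that is, Σ_{i∈I}H_i is the unique I-canonical element when |I∩{2,5,7}| is even, and the I-canonical elements are the elements Σ_{i∈I}H_i + H_s with s ∈ I∩{2,5,7} when |I∩{2,5,7}| is odd. -/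
/-- The duals `H_1, …, H_7` of the simple roots of `e_7`, expressed in coordinates
with respect to the basis `η_1, …, η_7` dual to the fundamental weights. -/
def HE7 : ℕ → Fin 7 → ℚ
  | 1 => ![2, 2, 3, 4, 3, 2, 1]
  | 2 => ![2, 7/2, 4, 6, 9/2, 3, 3/2]
  | 3 => ![3, 4, 6, 8, 6, 4, 2]
  | 4 => ![4, 6, 8, 12, 9, 6, 3]
  | 5 => ![3, 9/2, 6, 9, 15/2, 5, 5/2]
  | 6 => ![2, 3, 4, 6, 5, 4, 2]
  | 7 => ![1, 3/2, 2, 3, 5/2, 2, 3/2]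
  | _ => 0

/-- The integer lattice of the simply connected group `Ẽ_7`: `ℤ^7` in
`η`-coordinates. -/
def JE7 : Set (Fin 7 → ℚ) := {v | ∀ j, ∃ m : ℤ, v j = m}

/-- The set of `I`-canonical elements for a lattice `𝔏 ⊆ ℚ^7`. -/
def ICanonSet (𝔏 : Set (Fin 7 → ℚ)) (H : ℕ → Fin 7 → ℚ) (I : Finset ℕ) :
    Set (Fin 7 → ℚ) :=
  {ξ | ∃ c : ℕ → ℕ, (∀ i ∈ I, 1 ≤ c i) ∧ ξ = ∑ i ∈ I, c i • H i ∧ ξ ∈ 𝔏 ∧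
    ∀ c' : ℕ → ℕ, (∀ i ∈ I, 1 ≤ c' i ∧ c' i ≤ c i) →
      (∑ i ∈ I, c' i • H i) ∈ 𝔏 → (∑ i ∈ I, c' i • H i) = ξ}

lemma eval7 (n : ℕ → ℕ) (j : Fin 7) :
    (∑ i ∈ Finset.Icc 1 7, n i • HE7 i) j =
      n 1 * HE7 1 j + n 2 * HE7 2 j + n 3 * HE7 3 j + n 4 * HE7 4 j +
      n 5 * HE7 5 j + n 6 * HE7 6 j + n 7 * HE7 7 j := by
  rw [show (Finset.Icc 1 7 : Finset ℕ) = {1,2,3,4,5,6,7} from rfl]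
  simp [Finset.sum_insert, Finset.mem_insert]
  ring

lemma coreJ (n : ℕ → ℕ) :
    (∑ i ∈ Finset.Icc 1 7, n i • HE7 i) ∈ JE7 ↔ Even (n 2 + n 5 + n 7) := by
  constructor
  · intro h
    obtain ⟨m, hm⟩ := h 6
    rw [eval7] at hm
    simp only [HE7, show (![2,2,3,4,3,2,1]:Fin 7→ℚ) 6 = 1 from rfl,
      show (![2,7/2,4,6,9/2,3,3/2]:Fin 7→ℚ) 6 = 3/2 from rfl,
      show (![3,4,6,8,6,4,2]:Fin 7→ℚ) 6 = 2 from rfl,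
      show (![4,6,8,12,9,6,3]:Fin 7→ℚ) 6 = 3 from rfl,
      show (![3,9/2,6,9,15/2,5,5/2]:Fin 7→ℚ) 6 = 5/2 from rfl,
      show (![2,3,4,6,5,4,2]:Fin 7→ℚ) 6 = 2 from rfl,
      show (![1,3/2,2,3,5/2,2,3/2]:Fin 7→ℚ) 6 = 3/2 from rfl] at hm
    rw [← Int.even_coe_nat]
    refine ⟨m - n 1 - 2*n 3 - 3*n 4 - 2*n 6 - n 2 - 2*n 5 - n 7, ?_⟩
    have : ((n 2 + n 5 + n 7 : ℕ) : ℚ) = ((m - n 1 - 2*n 3 - 3*n 4 - 2*n 6 - n 2 - 2*n 5 - n 7 + (m - n 1 - 2*n 3 - 3*n 4 - 2*n 6 - n 2 - 2*n 5 - n 7) : ℤ) : ℚ) := by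
      push_cast
      linarith
    exact_mod_cast this
  · rintro ⟨k, hk⟩
    intro j
    rw [eval7]
    have hkq : (n 2 : ℚ) + n 5 + n 7 = k + k := by exact_mod_cast hk
    fin_cases j <;> simp only [HE7] <;> norm_num
    · exact ⟨2*n 1 + 2*n 2 + 3*n 3 + 4*n 4 + 3*n 5 + 2*n 6 + n 7, by push_cast; ring⟩
    · exact ⟨2*n 1 + 3*n 2 + 4*n 3 + 6*n 4 + 4*n 5 + 3*n 6 + n 7 + k, by push_cast; linarith⟩
    · exact ⟨3*n 1 + 4*n 2 + 6*n 3 + 8*n 4 + 6*n 5 + 4*n 6 + 2*n 7, by push_cast; ring⟩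
    · exact ⟨4*n 1 + 6*n 2 + 8*n 3 + 12*n 4 + 9*n 5 + 6*n 6 + 3*n 7, by push_cast; ring⟩
    · exact ⟨3*n 1 + 4*n 2 + 6*n 3 + 9*n 4 + 7*n 5 + 5*n 6 + 2*n 7 + k, by push_cast; linarith⟩
    · exact ⟨2*n 1 + 3*n 2 + 4*n 3 + 6*n 4 + 5*n 5 + 4*n 6 + 2*n 7, by push_cast; ring⟩
    · exact ⟨n 1 + n 2 + 2*n 3 + 3*n 4 + 2*n 5 + 2*n 6 + n 7 + k, by push_cast; linarith⟩

lemma memJ (I : Finset ℕ) (hI : I ⊆ Finset.Icc 1 7) (c : ℕ → ℕ) :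
    (∑ i ∈ I, c i • HE7 i) ∈ JE7 ↔ Even (∑ i ∈ I ∩ ({2,5,7} : Finset ℕ), c i) := by
  set n : ℕ → ℕ := fun i => if i ∈ I then c i else 0 with hn
  have h1 : ∑ i ∈ I, c i • HE7 i = ∑ i ∈ Finset.Icc 1 7, n i • HE7 i := by
    rw [← Finset.sum_subset hI (fun x _ hx => by simp [hn, hx])]
    exact Finset.sum_congr rfl (fun i hi => by simp [hn, hi])
  have h2 : ∑ i ∈ I ∩ ({2,5,7} : Finset ℕ), c i = n 2 + n 5 + n 7 := by
    have e1 : ∑ i ∈ I ∩ ({2,5,7} : Finset ℕ), c i = ∑ i ∈ I ∩ ({2,5,7} : Finset ℕ), n i :=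
      Finset.sum_congr rfl (fun i hi => by simp [hn, (Finset.mem_inter.1 hi).1])
    have e2 : ∑ i ∈ I ∩ ({2,5,7} : Finset ℕ), n i = ∑ i ∈ ({2,5,7} : Finset ℕ), n i :=
      Finset.sum_subset Finset.inter_subset_right
        (fun x hx hx2 => by
          simp only [hn]
          rw [if_neg (fun h => hx2 (Finset.mem_inter.2 ⟨h, hx⟩))])
    rw [e1, e2]
    simp [Finset.sum_insert, Finset.mem_insert]
    ring
  rw [h1, h2]
  exact coreJ n

lemma sum_plus (I : Finset ℕ) (s : ℕ) (hs : s ∈ I) :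
    ∑ i ∈ I, (if i = s then 2 else 1) • HE7 i = (∑ i ∈ I, HE7 i) + HE7 s := by
  have : ∀ i ∈ I, (if i = s then 2 else 1) • HE7 i
      = HE7 i + (if i = s then HE7 i else 0) := by
    intro i _
    split_ifs with h
    · rw [two_smul]
    · rw [one_smul, add_zero]
  rw [Finset.sum_congr rfl this, Finset.sum_add_distrib, Finset.sum_ite_eq' I s HE7, if_pos hs]

lemma sum_plus_card (t : Finset ℕ) (s : ℕ) (hs : s ∈ t) :
    ∑ i ∈ t, (if i = s then 2 else 1) = t.card + 1 := by
  have : ∀ i ∈ t, (if i = s then 2 else 1) = 1 + (if i = s then 1 else 0) := by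
    intro i _; split_ifs <;> rfl
  rw [Finset.sum_congr rfl this, Finset.sum_add_distrib, Finset.sum_const, Finset.sum_ite_eq' t s,
    if_pos hs]
  simp

lemma exists_even (t : Finset ℕ) (c : ℕ → ℕ) (hodd : Odd t.card)
    (hev : Even (∑ i ∈ t, c i)) : ∃ s ∈ t, Even (c s) := by
  by_contra h
  push_neg at h
  have h2 : (∑ i ∈ t, c i) % 2 = t.card % 2 := by
    rw [Finset.sum_nat_mod, Finset.sum_congr rfl
      (fun i hi => Nat.odd_iff.1 (Nat.not_even_iff_odd.1 (h i hi)))]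
    simp [Finset.sum_const, Nat.mul_mod]
  rw [Nat.even_iff] at hev
  rw [Nat.odd_iff] at hodd
  omega

/-- For nonempty `I ⊆ {1,…,7}`: `Σ_{i∈I} H_i` is the unique
`I`-canonical element of `Ẽ_7` when `|I ∩ {2,5,7}|` is even, and the `I`-canonical
elements are exactly the `Σ_{i∈I} H_i + H_s` with `s ∈ I ∩ {2,5,7}` when
`|I ∩ {2,5,7}|` is odd. -/
theorem e7_canonical (I : Finset ℕ) (hI : I ⊆ Finset.Icc 1 7) (hne : I.Nonempty) :
    (Even (I ∩ ({2, 5, 7} : Finset ℕ)).card →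
      ICanonSet JE7 HE7 I = {∑ i ∈ I, HE7 i}) ∧
    (Odd (I ∩ ({2, 5, 7} : Finset ℕ)).card →
      ICanonSet JE7 HE7 I =
        {ξ | ∃ s ∈ I ∩ ({2, 5, 7} : Finset ℕ), ξ = (∑ i ∈ I, HE7 i) + HE7 s}) := by
  constructor
  · intro hev
    ext ξ
    simp only [ICanonSet, Set.mem_setOf_eq, Set.mem_singleton_iff]
    constructor
    · rintro ⟨c, hc1, hξ, hξJ, hmin⟩
      have hJ : (∑ i ∈ I, (fun _ => 1 : ℕ → ℕ) i • HE7 i) ∈ JE7 := by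
        rw [memJ I hI]
        simpa using hev
      have := hmin (fun _ => 1) (fun i hi => ⟨le_refl 1, hc1 i hi⟩) hJ
      simp only [one_smul] at this
      exact this.symm
    · rintro rfl
      refine ⟨fun _ => 1, fun i _ => le_refl 1,
        Finset.sum_congr rfl (fun i _ => (one_smul ℕ _).symm), ?_, ?_⟩
      · have : (∑ i ∈ I, (fun _ => 1 : ℕ → ℕ) i • HE7 i) ∈ JE7 := by
          rw [memJ I hI]; simpa using hev
        simpa only [one_smul] using this
      · intro c' hc' _
        refine Finset.sum_congr rfl (fun i hi => ?_)
        have := hc' i hi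
        have h1 : c' i = 1 := le_antisymm this.2 this.1
        rw [h1, one_smul]
  · intro hod
    ext ξ
    simp only [ICanonSet, Set.mem_setOf_eq]
    constructor
    · rintro ⟨c, hc1, hξ, hξJ, hmin⟩
      have hE : Even (∑ i ∈ I ∩ ({2,5,7} : Finset ℕ), c i) := by
        rw [← memJ I hI]; rw [← hξ]; exact hξJ
      obtain ⟨s, hs, hse⟩ := exists_even _ c hod hE
      have hsI : s ∈ I := (Finset.mem_inter.1 hs).1
      have hs2 : 2 ≤ c s := by
        obtain ⟨r, hr⟩ := hse
        have := hc1 s hsI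
        omega
      refine ⟨s, hs, ?_⟩
      have hJ2 : (∑ i ∈ I, (if i = s then 2 else 1) • HE7 i) ∈ JE7 := by
        rw [memJ I hI, sum_plus_card _ s hs]
        exact Nat.even_add_one.2 (Nat.not_even_iff_odd.2 hod)
      have hmins := hmin (fun i => if i = s then 2 else 1)
        (fun i hi => by
          split_ifs with h
          · exact ⟨by norm_num, h ▸ hs2⟩
          · exact ⟨le_refl 1, hc1 i hi⟩) hJ2
      rw [← hmins, sum_plus I s hsI]
    · rintro ⟨s, hs, rfl⟩
      have hsI : s ∈ I := (Finset.mem_inter.1 hs).1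
      refine ⟨fun i => if i = s then 2 else 1, ?_, (sum_plus I s hsI).symm, ?_, ?_⟩
      · intro i _; dsimp only; split_ifs <;> norm_num
      · rw [← sum_plus I s hsI]
        rw [memJ I hI, sum_plus_card _ s hs]
        exact Nat.even_add_one.2 (Nat.not_even_iff_odd.2 hod)
      · intro c' hc' hc'J
        have h1 : ∀ i ∈ I, i ≠ s → c' i = 1 := by
          intro i hi hne'
          have := hc' i hi
          dsimp only at this
          rw [if_neg hne'] at this
          omega
        have hcs : c' s = 1 ∨ c' s = 2 := by
          have := hc' s hsI
          dsimp only at this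
          rw [if_pos rfl] at this
          omega
        rcases hcs with h | h
        · exfalso
          have hall : ∀ i ∈ I, c' i = 1 := by
            intro i hi
            by_cases hne' : i = s
            · rw [hne', h]
            · exact h1 i hi hne'
          have hEc' : Even (∑ i ∈ I ∩ ({2,5,7} : Finset ℕ), c' i) := (memJ I hI c').1 hc'J
          rw [Finset.sum_congr rfl (fun i hi => hall i (Finset.mem_inter.1 hi).1)] at hEc'
          simp only [Finset.sum_const, smul_eq_mul, mul_one] at hEc'
          exact (Nat.not_even_iff_odd.2 hod) hEc'
        · have : ∀ i ∈ I, c' i • HE7 i = (if i = s then 2 else 1) • HE7 i := by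
            intro i hi
            by_cases hne' : i = s
            · rw [hne', h, if_pos rfl]
            · rw [h1 i hi hne', if_neg hne']
          rw [Finset.sum_congr rfl this, sum_plus I s hsI]
end

section
/- Let n ≥ 1 and let H = ℂ[λ,λ^{−1}]^n be the module of ℂ^n-valued Laurent polynomials, with H_+ = ℂ[λ]^n. Let W be a ℂ-linear subspace of H with λH_+ ⊆ W ⊆ λ^{−1}H_+ such that whenever s(λ) ∈ W, also s(−λ) ∈ W (invariance under the substitution λ ↦ −λ). Then there exist ℂ-subspaces A_{−1} and A_0 of ℂ^n such that W = λ^{−1}A_{−1} + A_0 + λH_+ (sum of ℂ-subspaces of H). In particular W corresponds to an S¹-invariant element of the Grassmannian model, i.e., to a homomorphism S¹ → U(n). -/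
/-!
`H = ℂ[λ,λ⁻¹]^n` is modelled as finitely supported families `ℤ →₀ ℂ^n`
(the coefficient of `λ^m` being the value at `m`).
-/

/-- The subspace `λ^k V ⊆ H` for a subspace `V ⊆ ℂ^n`. -/
noncomputable def atDeg (n : ℕ) (k : ℤ) (V : Submodule ℂ (Fin n → ℂ)) :
    Submodule ℂ (ℤ →₀ (Fin n → ℂ)) :=
  V.map (Finsupp.lsingle k)

/-- The subspace `λ^d H_+ ⊆ H`: elements with no coefficients below degree `d`. -/
noncomputable def shiftedHplus (n : ℕ) (d : ℤ) :
    Submodule ℂ (ℤ →₀ (Fin n → ℂ)) where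
  carrier := {f | ∀ m : ℤ, m < d → f m = 0}
  zero_mem' := by intro m _; simp
  add_mem' := by
    intro f g hf hg m hm
    simp [Finsupp.add_apply, hf m hm, hg m hm]
  smul_mem' := by
    intro c f hf m hm
    simp [Finsupp.smul_apply, hf m hm]

/-- If `λH_+ ⊆ W ⊆ λ⁻¹H_+` and `W` is invariant under the
substitution `λ ↦ -λ` (the coefficientwise map `f m ↦ (-1)^m f m`), then
`W = λ⁻¹A₋₁ + A₀ + λH_+` for some subspaces `A₋₁, A₀ ⊆ ℂ^n`; in particular `W` is
`S¹`-invariant. -/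
theorem s1_invariant_of_short_interval (n : ℕ) (hn : 1 ≤ n)
    (W : Submodule ℂ (ℤ →₀ (Fin n → ℂ)))
    (hlow : shiftedHplus n 1 ≤ W) (hup : W ≤ shiftedHplus n (-1))
    (hinv : ∀ f ∈ W, ∃ g ∈ W, ∀ m : ℤ, g m = ((-1 : ℂ) ^ m) • f m) :
    ∃ A B : Submodule ℂ (Fin n → ℂ),
      W = atDeg n (-1) A ⊔ atDeg n 0 B ⊔ shiftedHplus n 1 := by
  classical
  have hsingle : ∀ (a m : ℤ) (v : Fin n → ℂ),
      (Finsupp.single a v) m = if a = m then v else 0 := fun a m v =>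
    Finsupp.single_apply
  refine ⟨W.map (Finsupp.lapply (-1)), W.map (Finsupp.lapply 0), ?_⟩
  have key : ∀ f ∈ W, Finsupp.single (-1 : ℤ) (f (-1)) ∈ W ∧
      Finsupp.single (0 : ℤ) (f 0) ∈ W := by
    intro f hf
    obtain ⟨g, hg, hgm⟩ := hinv f hf
    have hpow : ((-1 : ℂ)) ^ (-1 : ℤ) = -1 := by norm_num
    have hgm1 : g (-1) = -(f (-1)) := by
      rw [hgm (-1), hpow]; ext i; simp
    have hgm0 : g 0 = f 0 := by
      rw [hgm 0]; norm_num
    have h1 : ((2:ℂ)⁻¹) • (f - g) ∈ W := W.smul_mem _ (W.sub_mem hf hg)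
    have h2 : ((2:ℂ)⁻¹) • (f + g) ∈ W := W.smul_mem _ (W.add_mem hf hg)
    constructor
    · have hr : ((2:ℂ)⁻¹) • (f - g) - Finsupp.single (-1 : ℤ) (f (-1)) ∈
          shiftedHplus n 1 := by
        intro m hm
        simp only [Finsupp.sub_apply, Finsupp.smul_apply, hsingle]
        rcases lt_trichotomy m (-1) with hlt | heq | hgt
        · rw [hup hf m hlt, hup hg m hlt, if_neg (by omega : (-1:ℤ) ≠ m)]
          simp
        · subst heq
          rw [if_pos rfl, hgm1]
          ext i; simp; ring
        · have hm0 : m = 0 := by omega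
          subst hm0
          rw [if_neg (by omega : (-1:ℤ) ≠ 0), hgm0]
          simp
      have := W.sub_mem h1 (hlow hr)
      simpa using this
    · have hr : ((2:ℂ)⁻¹) • (f + g) - Finsupp.single (0 : ℤ) (f 0) ∈
          shiftedHplus n 1 := by
        intro m hm
        simp only [Finsupp.sub_apply, Finsupp.add_apply, Finsupp.smul_apply, hsingle]
        rcases lt_trichotomy m (-1) with hlt | heq | hgt
        · rw [hup hf m hlt, hup hg m hlt, if_neg (by omega : (0:ℤ) ≠ m)]
          simp
        · subst heq
          rw [if_neg (by omega : (0:ℤ) ≠ -1), hgm1]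
          simp
        · have hm0 : m = 0 := by omega
          subst hm0
          rw [if_pos rfl, hgm0]
          ext i; simp; ring
      have := W.sub_mem h2 (hlow hr)
      simpa using this
  apply le_antisymm
  · intro f hf
    have h1 : Finsupp.single (-1 : ℤ) (f (-1)) ∈ atDeg n (-1)
        (W.map (Finsupp.lapply (-1))) := ⟨f (-1), ⟨f, hf, rfl⟩, rfl⟩
    have h2 : Finsupp.single (0 : ℤ) (f 0) ∈ atDeg n 0
        (W.map (Finsupp.lapply 0)) := ⟨f 0, ⟨f, hf, rfl⟩, rfl⟩
    have hr : f - Finsupp.single (-1 : ℤ) (f (-1)) - Finsupp.single (0 : ℤ) (f 0) ∈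
        shiftedHplus n 1 := by
      intro m hm
      simp only [Finsupp.sub_apply, hsingle]
      rcases lt_trichotomy m (-1) with hlt | heq | hgt
      · rw [hup hf m hlt, if_neg (by omega : (-1:ℤ) ≠ m),
          if_neg (by omega : (0:ℤ) ≠ m)]
        simp
      · subst heq
        rw [if_pos rfl, if_neg (by omega : (0:ℤ) ≠ -1)]
        simp
      · have hm0 : m = 0 := by omega
        subst hm0
        rw [if_pos rfl, if_neg (by omega : (-1:ℤ) ≠ 0)]
        simp
    have hmem : f = Finsupp.single (-1 : ℤ) (f (-1)) + Finsupp.single (0 : ℤ) (f 0)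
        + (f - Finsupp.single (-1 : ℤ) (f (-1)) - Finsupp.single (0 : ℤ) (f 0)) := by
      abel
    rw [hmem]
    exact add_mem (add_mem (Submodule.mem_sup_left (Submodule.mem_sup_left h1))
      (Submodule.mem_sup_left (Submodule.mem_sup_right h2)))
      (Submodule.mem_sup_right hr)
  · refine sup_le (sup_le ?_ ?_) hlow
    · rintro _ ⟨v, ⟨f, hf, rfl⟩, rfl⟩
      exact (key f hf).1
    · rintro _ ⟨v, ⟨f, hf, rfl⟩, rfl⟩
      exact (key f hf).2
end
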